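/- arXiv:2303.17618 — 3 statements merged into one kernel-verified Lean document; each statement's English description precedes it below -/
import Mathlib

section
/- Let p1, p2 be probability distributions on the finite metric space (A^n, d_B) where d_B is the Cantor distance, and let π be an optimal coupling of p1 and p2 for the Kantorovich (optimal transport) problem with cost d_B. Then for every word w in A^n, π(w,w) = min{p1(w), p2(w)}. -/
/-- The Cantor distance on `n`-long words: `2^{-l}` where `l` is the (1-based)
index of the first position at which the words differ, and `0` if they are equal. -/
noncomputable def cantorDist {A : Type*} [DecidableEq A] {n : ℕ} (w1 w2 : Fin n → A) : ℝ :=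
  if h : w1 = w2 then 0
  else ((1 : ℝ) / 2) ^
    (((Finset.univ.filter fun k => w1 k ≠ w2 k).min'
      (by
        obtain ⟨k, hk⟩ := Function.ne_iff.mp h
        exact ⟨k, Finset.mem_filter.mpr ⟨Finset.mem_univ k, hk⟩⟩) : Fin n).1 + 1)

/-- A probability distribution on a finite type. -/
def IsDist {X : Type*} [Fintype X] (p : X → ℝ) : Prop :=
  (∀ x, 0 ≤ p x) ∧ ∑ x, p x = 1

/-- `π` is a coupling of `p` and `q`: a nonnegative joint distribution with marginals `p`, `q`. -/
def IsCoupling {X : Type*} [Fintype X] (π : X → X → ℝ) (p q : X → ℝ) : Prop :=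
  (∀ x y, 0 ≤ π x y) ∧ (∀ x, ∑ y, π x y = p x) ∧ (∀ y, ∑ x, π x y = q y)

/-- Transport cost of a plan `π` for ground cost `d`. -/
noncomputable def transportCost {X : Type*} [Fintype X] (d : X → X → ℝ) (π : X → X → ℝ) : ℝ :=
  ∑ x, ∑ y, d x y * π x y

/-- The Kantorovich (optimal transport) cost between `p` and `q` with ground cost `d`. -/
noncomputable def kantorovich {X : Type*} [Fintype X] (d : X → X → ℝ) (p q : X → ℝ) : ℝ :=
  sInf {c | ∃ π, IsCoupling π p q ∧ transportCost d π = c}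

lemma cantor_self {A : Type*} [DecidableEq A] {n : ℕ} (w : Fin n → A) : cantorDist w w = 0 := by
  simp [cantorDist]

lemma cantor_pos {A : Type*} [DecidableEq A] {n : ℕ} {x y : Fin n → A} (h : x ≠ y) :
    0 < cantorDist x y := by
  rw [cantorDist, dif_neg h]
  positivity

lemma cantor_strict {A : Type*} [DecidableEq A] {n : ℕ} {x w y : Fin n → A}
    (hx : x ≠ w) (hy : y ≠ w) :
    cantorDist x y < cantorDist x w + cantorDist w y := by
  have hwy : w ≠ y := fun h => hy h.symm
  by_cases hxy : x = y
  · subst hxy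
    rw [cantor_self]
    exact add_pos (cantor_pos hx) (cantor_pos hwy)
  · rw [cantorDist, dif_neg hxy, cantorDist, dif_neg hx, cantorDist, dif_neg hwy]
    set Sxy := Finset.univ.filter fun k => x k ≠ y k with hSxy
    set Sxw := Finset.univ.filter fun k => x k ≠ w k with hSxw
    set Swy := Finset.univ.filter fun k => w k ≠ y k with hSwy
    have hne_xy : Sxy.Nonempty := by
      obtain ⟨k, hk⟩ := Function.ne_iff.mp hxy
      exact ⟨k, Finset.mem_filter.mpr ⟨Finset.mem_univ k, hk⟩⟩
    have hne_xw : Sxw.Nonempty := by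
      obtain ⟨k, hk⟩ := Function.ne_iff.mp hx
      exact ⟨k, Finset.mem_filter.mpr ⟨Finset.mem_univ k, hk⟩⟩
    have hne_wy : Swy.Nonempty := by
      obtain ⟨k, hk⟩ := Function.ne_iff.mp hwy
      exact ⟨k, Finset.mem_filter.mpr ⟨Finset.mem_univ k, hk⟩⟩
    set l := Sxy.min' hne_xy with hl
    -- key: Sxw.min' ≤ l ∨ Swy.min' ≤ l
    have hkey : Sxw.min' hne_xw ≤ l ∨ Swy.min' hne_wy ≤ l := by
      by_contra hc
      push_neg at hc
      have h1 : l ∉ Sxw := fun hm => absurd (Finset.min'_le _ _ hm) (not_le.mpr hc.1)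
      have h2 : l ∉ Swy := fun hm => absurd (Finset.min'_le _ _ hm) (not_le.mpr hc.2)
      have e1 : x l = w l := by
        by_contra he; exact h1 (Finset.mem_filter.mpr ⟨Finset.mem_univ _, he⟩)
      have e2 : w l = y l := by
        by_contra he; exact h2 (Finset.mem_filter.mpr ⟨Finset.mem_univ _, he⟩)
      have : x l = y l := e1.trans e2
      have hmem : l ∈ Sxy := Sxy.min'_mem hne_xy
      rw [hSxy, Finset.mem_filter] at hmem
      exact hmem.2 this
    have half : (0:ℝ) ≤ 1/2 := by norm_num
    have half1 : (1:ℝ)/2 ≤ 1 := by norm_num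
    rcases hkey with h | h
    · have h1 : ((1:ℝ)/2) ^ ((l:Fin n).1 + 1) ≤ ((1:ℝ)/2) ^ ((Sxw.min' hne_xw).1 + 1) :=
        pow_le_pow_of_le_one half half1 (Nat.add_le_add_right (Fin.le_def.mp h) 1)
      have h2 : (0:ℝ) < ((1:ℝ)/2) ^ ((Swy.min' hne_wy).1 + 1) := by positivity
      calc ((1:ℝ)/2) ^ ((l:Fin n).1 + 1) ≤ ((1:ℝ)/2) ^ ((Sxw.min' hne_xw).1 + 1) := h1
        _ < _ := by linarith
    · have h1 : ((1:ℝ)/2) ^ ((l:Fin n).1 + 1) ≤ ((1:ℝ)/2) ^ ((Swy.min' hne_wy).1 + 1) :=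
        pow_le_pow_of_le_one half half1 (Nat.add_le_add_right (Fin.le_def.mp h) 1)
      have h2 : (0:ℝ) < ((1:ℝ)/2) ^ ((Sxw.min' hne_xw).1 + 1) := by positivity
      calc ((1:ℝ)/2) ^ ((l:Fin n).1 + 1) ≤ ((1:ℝ)/2) ^ ((Swy.min' hne_wy).1 + 1) := h1
        _ < _ := by linarith

lemma row_ind {X : Type*} [Fintype X] [DecidableEq X] (ε : ℝ) (c e a : X) :
    ∑ b, (if a = c ∧ b = e then ε else 0) = if a = c then ε else 0 := by
  simp [ite_and]

lemma col_ind {X : Type*} [Fintype X] [DecidableEq X] (ε : ℝ) (c e b : X) :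
    ∑ a, (if a = c ∧ b = e then ε else 0) = if b = e then ε else 0 := by
  simp [ite_and]

lemma dsum_ind {X : Type*} [Fintype X] [DecidableEq X] (f : X → X → ℝ) (ε : ℝ) (c e : X) :
    ∑ a, ∑ b, f a b * (if a = c ∧ b = e then ε else 0) = f c e * ε := by
  simp [ite_and, mul_ite, mul_zero]

/-- Generic perturbation lemma: if an optimal coupling for a cost `d` with
`d w w = 0` had `π w w < min (p1 w) (p2 w)`, and strict triangle-type inequality holds,
we get a contradiction. Here stated directly as the main diagonal lemma. -/
theorem diag_lemma {X : Type*} [Fintype X] [DecidableEq X]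
    (d : X → X → ℝ) (p1 p2 : X → ℝ)
    (π : X → X → ℝ) (hπ : IsCoupling π p1 p2)
    (hopt : ∀ π', IsCoupling π' p1 p2 → transportCost d π ≤ transportCost d π')
    (w : X) (hdw : d w w = 0)
    (hstrict : ∀ x y : X, x ≠ w → y ≠ w → d x y < d w y + d x w) :
    π w w = min (p1 w) (p2 w) := by
  obtain ⟨hπ0, hπ1, hπ2⟩ := hπ
  have h1 : π w w ≤ p1 w := by
    rw [← hπ1 w]
    exact Finset.single_le_sum (fun b _ => hπ0 w b) (Finset.mem_univ w)
  have h2 : π w w ≤ p2 w := by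
    rw [← hπ2 w]
    exact Finset.single_le_sum (fun a _ => hπ0 a w) (Finset.mem_univ w)
  refine le_antisymm (le_min h1 h2) ?_
  by_contra hlt
  push_neg at hlt
  rw [lt_min_iff] at hlt
  obtain ⟨hl1, hl2⟩ := hlt
  -- find y0 ≠ w with π w y0 > 0
  have hrow : 0 < ∑ b ∈ Finset.univ.erase w, π w b := by
    have := Finset.sum_erase_add Finset.univ (π w) (Finset.mem_univ w)
    rw [hπ1 w] at this
    linarith
  obtain ⟨y0, hy0mem, hy0pos⟩ : ∃ b ∈ Finset.univ.erase w, 0 < π w b := by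
    by_contra hc
    push_neg at hc
    have : ∑ b ∈ Finset.univ.erase w, π w b ≤ 0 :=
      Finset.sum_nonpos hc
    linarith
  have hy0 : y0 ≠ w := Finset.ne_of_mem_erase hy0mem
  have hcol : 0 < ∑ a ∈ Finset.univ.erase w, π a w := by
    have := Finset.sum_erase_add Finset.univ (fun a => π a w) (Finset.mem_univ w)
    rw [hπ2 w] at this
    linarith
  obtain ⟨x0, hx0mem, hx0pos⟩ : ∃ a ∈ Finset.univ.erase w, 0 < π a w := by
    by_contra hc
    push_neg at hc
    have : ∑ a ∈ Finset.univ.erase w, π a w ≤ 0 := Finset.sum_nonpos hc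
    linarith
  have hx0 : x0 ≠ w := Finset.ne_of_mem_erase hx0mem
  set ε := min (π w y0) (π x0 w) with hε
  have hεpos : 0 < ε := lt_min hy0pos hx0pos
  -- the perturbed coupling
  set π' : X → X → ℝ := fun a b => π a b
      + (if a = w ∧ b = w then ε else 0) + (if a = x0 ∧ b = y0 then ε else 0)
      - (if a = w ∧ b = y0 then ε else 0) - (if a = x0 ∧ b = w then ε else 0) with hπ'
  have hcoup : IsCoupling π' p1 p2 := by
    refine ⟨?_, ?_, ?_⟩
    · intro a b
      have e1 : ε ≤ π w y0 := min_le_left _ _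
      have e2 : ε ≤ π x0 w := min_le_right _ _
      have h0 := hπ0 a b
      simp only [hπ']
      by_cases hc1 : a = w ∧ b = y0
      · have hc2 : ¬(a = x0 ∧ b = w) := fun h => hx0 (h.1.symm.trans hc1.1)
        rw [if_pos hc1, if_neg hc2]
        have hab : π a b = π w y0 := by rw [hc1.1, hc1.2]
        split_ifs <;> linarith [hεpos.le]
      · by_cases hc2 : a = x0 ∧ b = w
        · rw [if_pos hc2, if_neg hc1]
          have hab : π a b = π x0 w := by rw [hc2.1, hc2.2]
          split_ifs <;> linarith [hεpos.le]
        · rw [if_neg hc1, if_neg hc2]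
          split_ifs <;> linarith [hεpos.le]
    · intro a
      simp only [hπ']
      simp only [Finset.sum_add_distrib, Finset.sum_sub_distrib]
      rw [row_ind, row_ind, row_ind, row_ind, hπ1]
      split_ifs <;> ring
    · intro b
      simp only [hπ']
      simp only [Finset.sum_add_distrib, Finset.sum_sub_distrib]
      rw [col_ind, col_ind, col_ind, col_ind, hπ2]
      split_ifs <;> ring
  have hcost : transportCost d π' = transportCost d π + ε * (d w w + d x0 y0 - d w y0 - d x0 w) := by
    rw [transportCost, transportCost, hπ']
    simp only [mul_add, mul_sub, Finset.sum_add_distrib, Finset.sum_sub_distrib]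
    rw [dsum_ind, dsum_ind, dsum_ind, dsum_ind]
    ring
  have hineq := hopt π' hcoup
  rw [hcost] at hineq
  have hd : d x0 y0 < d w y0 + d x0 w := hstrict x0 y0 hx0 hy0
  nlinarith

/-- On words with the Cantor distance, any optimal coupling puts mass
`min {p1(w), p2(w)}` on every diagonal entry. -/
theorem optimal_coupling_diag {A : Type*} [Fintype A] [DecidableEq A] {n : ℕ}
    (p1 p2 : (Fin n → A) → ℝ) (hp1 : IsDist p1) (hp2 : IsDist p2)
    (π : (Fin n → A) → (Fin n → A) → ℝ) (hπ : IsCoupling π p1 p2)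
    (hopt : ∀ π', IsCoupling π' p1 p2 → transportCost cantorDist π ≤ transportCost cantorDist π') :
    ∀ w : Fin n → A, π w w = min (p1 w) (p2 w) := by
  intro w
  exact diag_lemma cantorDist p1 p2 π hπ hopt w (cantor_self w)
    (fun x y hx hy => by
      have := cantor_strict (w := w) hx hy
      linarith)
end

section
/- With the same setup as the recursion theorem, the increments of the Kantorovich metric satisfy 0 ≤ K(p1^{n+1}, p2^{n+1}) − K(p1^n, p2^n) ≤ 2^{-(n+1)}. -/
section aux
variable {A : Type*} [DecidableEq A] {n : ℕ}

lemma cantorDist_nonneg (w1 w2 : Fin n → A) : 0 ≤ cantorDist w1 w2 := by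
  unfold cantorDist; split <;> positivity

lemma cantorDist_self (w : Fin n → A) : cantorDist w w = 0 := by
  unfold cantorDist; simp

lemma cantorDist_snoc_ne (x y : Fin n → A) (a b : A) (hxy : x ≠ y) :
    cantorDist (Fin.snoc x a) (Fin.snoc y b) = cantorDist x y := by
  have hne : (Fin.snoc x a : Fin (n+1) → A) ≠ Fin.snoc y b := by
    intro h
    apply hxy
    have := congrArg Fin.init h
    simpa using this
  rw [cantorDist, cantorDist, dif_neg hne, dif_neg hxy]
  congr 1
  have hS : ((Finset.univ.filter fun k => x k ≠ y k) : Finset (Fin n)).Nonempty := by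
    obtain ⟨k, hk⟩ := Function.ne_iff.mp hxy
    exact ⟨k, Finset.mem_filter.mpr ⟨Finset.mem_univ k, hk⟩⟩
  set m := (Finset.univ.filter fun k => x k ≠ y k).min' hS with hm
  have hT : ((Finset.univ.filter fun k => (Fin.snoc x a : Fin (n+1) → A) k ≠ (Fin.snoc y b : Fin (n+1) → A) k) :
      Finset (Fin (n+1))).Nonempty := by
    obtain ⟨k, hk⟩ := Function.ne_iff.mp hne
    exact ⟨k, Finset.mem_filter.mpr ⟨Finset.mem_univ k, hk⟩⟩
  have hmem : (Fin.castSucc m) ∈ (Finset.univ.filter fun k => (Fin.snoc x a : Fin (n+1) → A) k ≠ (Fin.snoc y b : Fin (n+1) → A) k) := by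
    refine Finset.mem_filter.mpr ⟨Finset.mem_univ _, ?_⟩
    simpa using (Finset.mem_filter.mp (Finset.min'_mem _ hS)).2
  have hmin : (Finset.univ.filter fun k => (Fin.snoc x a : Fin (n+1) → A) k ≠ (Fin.snoc y b : Fin (n+1) → A) k).min' hT
      = Fin.castSucc m := by
    refine le_antisymm (Finset.min'_le _ _ hmem) (Finset.le_min' _ _ _ ?_)
    intro j hj
    rcases Fin.eq_castSucc_or_eq_last j with ⟨k, rfl⟩ | rfl
    · have hk' : x k ≠ y k := by simpa using (Finset.mem_filter.mp hj).2
      have hmk : m ≤ k := Finset.min'_le (Finset.univ.filter fun k => x k ≠ y k) k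
        (Finset.mem_filter.mpr ⟨Finset.mem_univ k, hk'⟩)
      exact Fin.castSucc_le_castSucc_iff.mpr hmk
    · exact (Fin.castSucc_lt_last m).le
  rw [hmin]
  rfl

lemma cantorDist_snoc_same (x : Fin n → A) (a b : A) :
    cantorDist (Fin.snoc x a) (Fin.snoc x b) ≤ ((1:ℝ)/2) ^ (n+1) := by
  by_cases hab : a = b
  · subst hab; rw [cantorDist_self]; positivity
  · rw [cantorDist]
    have hne : (Fin.snoc x a : Fin (n+1) → A) ≠ Fin.snoc x b := by
      intro h
      exact hab (by simpa using congrFun h (Fin.last n))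
    rw [dif_neg hne]
    have hT : ((Finset.univ.filter fun k => (Fin.snoc x a : Fin (n+1) → A) k ≠ (Fin.snoc x b : Fin (n+1) → A) k) :
        Finset (Fin (n+1))).Nonempty := by
      obtain ⟨k, hk⟩ := Function.ne_iff.mp hne
      exact ⟨k, Finset.mem_filter.mpr ⟨Finset.mem_univ k, hk⟩⟩
    have hmin : (Finset.univ.filter fun k => (Fin.snoc x a : Fin (n+1) → A) k ≠ (Fin.snoc x b : Fin (n+1) → A) k).min' hT
        = Fin.last n := by
      have hmem := Finset.min'_mem _ hT
      have h2 := (Finset.mem_filter.mp hmem).2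
      rcases Fin.eq_castSucc_or_eq_last
        ((Finset.univ.filter fun k => (Fin.snoc x a : Fin (n+1) → A) k ≠
          (Fin.snoc x b : Fin (n+1) → A) k).min' hT) with ⟨k, hk⟩ | hl
      · rw [hk] at h2; simp at h2
      · exact hl
    rw [hmin]
    simp [Fin.last]


lemma cantorDist_snoc_le (x y : Fin n → A) (a b : A) :
    cantorDist (Fin.snoc x a) (Fin.snoc y b) ≤ cantorDist x y + ((1:ℝ)/2)^(n+1) := by
  by_cases hxy : x = y
  · subst hxy; rw [cantorDist_self, zero_add]; exact cantorDist_snoc_same x a b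
  · rw [cantorDist_snoc_ne x y a b hxy]
    have : (0:ℝ) ≤ ((1:ℝ)/2)^(n+1) := by positivity
    linarith

lemma cantorDist_le_snoc (x y : Fin n → A) (a b : A) :
    cantorDist x y ≤ cantorDist (Fin.snoc x a) (Fin.snoc y b) := by
  by_cases hxy : x = y
  · subst hxy; rw [cantorDist_self]; exact cantorDist_nonneg _ _
  · rw [cantorDist_snoc_ne x y a b hxy]

lemma cantorDist_le_init_add (u v : Fin (n+1) → A) :
    cantorDist u v ≤ cantorDist (Fin.init u) (Fin.init v) + ((1:ℝ)/2)^(n+1) := by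
  have h := cantorDist_snoc_le (Fin.init u) (Fin.init v) (u (Fin.last n)) (v (Fin.last n))
  simpa [Fin.snoc_init_self] using h

end aux


section infra
variable {X : Type*} [Fintype X]

lemma cost_nonneg {d π : X → X → ℝ} (hd : ∀ x y, 0 ≤ d x y) (hπ : ∀ x y, 0 ≤ π x y) :
    0 ≤ transportCost d π :=
  Finset.sum_nonneg fun x _ => Finset.sum_nonneg fun y _ => mul_nonneg (hd x y) (hπ x y)

lemma kant_bddBelow {d : X → X → ℝ} (hd : ∀ x y, 0 ≤ d x y) (p q : X → ℝ) :
    BddBelow {c | ∃ π, IsCoupling π p q ∧ transportCost d π = c} := by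
  refine ⟨0, ?_⟩
  rintro c ⟨π, hπ, rfl⟩
  exact cost_nonneg hd hπ.1

lemma kant_le {d : X → X → ℝ} (hd : ∀ x y, 0 ≤ d x y) {p q : X → ℝ} {π : X → X → ℝ}
    (hπ : IsCoupling π p q) : kantorovich d p q ≤ transportCost d π :=
  csInf_le (kant_bddBelow hd p q) ⟨π, hπ, rfl⟩

lemma coupling_exists (p q : X → ℝ) (hp : IsDist p) (hq : IsDist q) :
    ∃ π : X → X → ℝ, IsCoupling π p q :=
  ⟨fun x y => p x * q y,
    fun x y => mul_nonneg (hp.1 x) (hq.1 y),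
    fun x => by rw [← Finset.mul_sum, hq.2, mul_one],
    fun y => by rw [← Finset.sum_mul, hp.2, one_mul]⟩

end infra

lemma sum_snoc {A : Type*} [Fintype A] {n : ℕ} (f : (Fin (n+1) → A) → ℝ) :
    ∑ u, f u = ∑ x : Fin n → A, ∑ a : A, f (Fin.snoc x a) := by
  rw [← Equiv.sum_comp (Fin.snocEquiv (fun _ => A)) f, Fintype.sum_prod_type]
  rw [Finset.sum_comm]
  rfl


section push
variable {A : Type*} [Fintype A] [DecidableEq A] {n : ℕ}

lemma push_coupling (p1 p2 : (Fin n → A) → ℝ) (q1 q2 : (Fin (n + 1) → A) → ℝ)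
    (hc1 : ∀ w : Fin n → A, p1 w = ∑ a : A, q1 (Fin.snoc w a))
    (hc2 : ∀ w : Fin n → A, p2 w = ∑ a : A, q2 (Fin.snoc w a))
    (π : (Fin (n+1) → A) → (Fin (n+1) → A) → ℝ) (hπ : IsCoupling π q1 q2) :
    IsCoupling (fun x y => ∑ a, ∑ b, π (Fin.snoc x a) (Fin.snoc y b)) p1 p2 := by
  obtain ⟨hπn, hπr, hπc⟩ := hπ
  refine ⟨fun x y => Finset.sum_nonneg fun a _ => Finset.sum_nonneg fun b _ => hπn _ _, ?_, ?_⟩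
  · intro x
    calc ∑ y : Fin n → A, ∑ a, ∑ b, π (Fin.snoc x a) (Fin.snoc y b)
        = ∑ a, ∑ y : Fin n → A, ∑ b, π (Fin.snoc x a) (Fin.snoc y b) := Finset.sum_comm
      _ = ∑ a, ∑ v, π (Fin.snoc x a) v :=
          Finset.sum_congr rfl fun a _ => (sum_snoc (fun v => π (Fin.snoc x a) v)).symm
      _ = ∑ a, q1 (Fin.snoc x a) := by simp [hπr]
      _ = p1 x := (hc1 x).symm
  · intro y
    calc ∑ x : Fin n → A, ∑ a, ∑ b, π (Fin.snoc x a) (Fin.snoc y b)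
        = ∑ x : Fin n → A, ∑ b, ∑ a, π (Fin.snoc x a) (Fin.snoc y b) :=
          Finset.sum_congr rfl fun x _ => Finset.sum_comm
      _ = ∑ b, ∑ x : Fin n → A, ∑ a, π (Fin.snoc x a) (Fin.snoc y b) := Finset.sum_comm
      _ = ∑ b, ∑ u, π u (Fin.snoc y b) :=
          Finset.sum_congr rfl fun b _ => (sum_snoc (fun u => π u (Fin.snoc y b))).symm
      _ = ∑ b, q2 (Fin.snoc y b) := by simp [hπc]
      _ = p2 y := (hc2 y).symm

end push

set_option linter.unusedSectionVars false

section push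
variable {A : Type*} [Fintype A] [DecidableEq A] {n : ℕ}

lemma push_cost (π : (Fin (n+1) → A) → (Fin (n+1) → A) → ℝ) (hπn : ∀ u v, 0 ≤ π u v) :
    transportCost cantorDist (fun x y => ∑ a, ∑ b, π (Fin.snoc x a) (Fin.snoc y b))
      ≤ transportCost cantorDist π := by
  have lhs_eq : transportCost cantorDist
      (fun x y => ∑ a, ∑ b, π (Fin.snoc x a) (Fin.snoc y b)) =
      ∑ x : Fin n → A, ∑ y : Fin n → A, ∑ a, ∑ b,
        cantorDist x y * π (Fin.snoc x a) (Fin.snoc y b) := by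
    refine Finset.sum_congr rfl fun x _ => Finset.sum_congr rfl fun y _ => ?_
    simp [Finset.mul_sum]
  have rhs_eq : transportCost cantorDist π =
      ∑ x : Fin n → A, ∑ y : Fin n → A, ∑ a, ∑ b,
        cantorDist (Fin.snoc x a) (Fin.snoc y b) * π (Fin.snoc x a) (Fin.snoc y b) := by
    rw [transportCost, sum_snoc (fun u => ∑ v, cantorDist u v * π u v)]
    refine Finset.sum_congr rfl fun x _ => ?_
    rw [show (∑ a, ∑ v, cantorDist (Fin.snoc x a) v * π (Fin.snoc x a) v)
        = ∑ a, ∑ y : Fin n → A, ∑ b,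
          cantorDist (Fin.snoc x a) (Fin.snoc y b) * π (Fin.snoc x a) (Fin.snoc y b)
      from Finset.sum_congr rfl fun a _ =>
        sum_snoc (fun v => cantorDist (Fin.snoc x a) v * π (Fin.snoc x a) v)]
    exact Finset.sum_comm
  rw [lhs_eq, rhs_eq]
  refine Finset.sum_le_sum fun x _ => Finset.sum_le_sum fun y _ =>
    Finset.sum_le_sum fun a _ => Finset.sum_le_sum fun b _ =>
    mul_le_mul_of_nonneg_right (cantorDist_le_snoc x y a b) (hπn _ _)

end push

section lift
variable {A : Type*} [Fintype A] [DecidableEq A] {n : ℕ}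

/-- Conditional-product lift of a coupling. -/
noncomputable def liftPlan (p1 p2 : (Fin n → A) → ℝ) (q1 q2 : (Fin (n + 1) → A) → ℝ)
    (σ : (Fin n → A) → (Fin n → A) → ℝ) : (Fin (n+1) → A) → (Fin (n+1) → A) → ℝ :=
  fun u v => σ (Fin.init u) (Fin.init v) * (q1 u / p1 (Fin.init u)) * (q2 v / p2 (Fin.init v))

variable (p1 p2 : (Fin n → A) → ℝ) (q1 q2 : (Fin (n + 1) → A) → ℝ)
  (σ : (Fin n → A) → (Fin n → A) → ℝ)

lemma lift_key (hq1 : IsDist q1) (hq2 : IsDist q2)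
    (hc1 : ∀ w : Fin n → A, p1 w = ∑ a : A, q1 (Fin.snoc w a))
    (hc2 : ∀ w : Fin n → A, p2 w = ∑ a : A, q2 (Fin.snoc w a))
    (hσ : IsCoupling σ p1 p2) (x y : Fin n → A) :
    ∑ a, ∑ b, liftPlan p1 p2 q1 q2 σ (Fin.snoc x a) (Fin.snoc y b) = σ x y := by
  obtain ⟨hσn, hσr, hσc⟩ := hσ
  have hsimp : ∀ a b : A, liftPlan p1 p2 q1 q2 σ (Fin.snoc x a) (Fin.snoc y b)
      = σ x y * (q1 (Fin.snoc x a) / p1 x) * (q2 (Fin.snoc y b) / p2 y) := by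
    intro a b; rw [liftPlan]; simp [Fin.init_snoc]
  by_cases hx : p1 x = 0
  · have hzσ : σ x y = 0 := by
      have h0 : ∑ y, σ x y = 0 := by rw [hσr x, hx]
      exact (Finset.sum_eq_zero_iff_of_nonneg fun y _ => hσn x y).mp h0 y (Finset.mem_univ y)
    simp [hsimp, hzσ]
  · by_cases hy : p2 y = 0
    · have hzσ : σ x y = 0 := by
        have h0 : ∑ x, σ x y = 0 := by rw [hσc y, hy]
        exact (Finset.sum_eq_zero_iff_of_nonneg fun x _ => hσn x y).mp h0 x (Finset.mem_univ x)
      simp [hsimp, hzσ]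
    · calc ∑ a, ∑ b, liftPlan p1 p2 q1 q2 σ (Fin.snoc x a) (Fin.snoc y b)
          = σ x y / (p1 x * p2 y) *
              ∑ a, ∑ b, q1 (Fin.snoc x a) * q2 (Fin.snoc y b) := by
            rw [Finset.mul_sum]
            refine Finset.sum_congr rfl fun a _ => ?_
            rw [Finset.mul_sum]
            refine Finset.sum_congr rfl fun b _ => ?_
            rw [hsimp]; ring
        _ = σ x y / (p1 x * p2 y) * (p1 x * p2 y) := by
            congr 1
            rw [hc1 x, hc2 y]
            exact (Finset.sum_mul_sum _ _ _ _).symm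
        _ = σ x y := div_mul_cancel₀ _ (mul_ne_zero hx hy)

lemma lift_coupling (hp1 : IsDist p1) (hp2 : IsDist p2) (hq1 : IsDist q1) (hq2 : IsDist q2)
    (hc1 : ∀ w : Fin n → A, p1 w = ∑ a : A, q1 (Fin.snoc w a))
    (hc2 : ∀ w : Fin n → A, p2 w = ∑ a : A, q2 (Fin.snoc w a))
    (hσ : IsCoupling σ p1 p2) :
    IsCoupling (liftPlan p1 p2 q1 q2 σ) q1 q2 := by
  obtain ⟨hσn, hσr, hσc⟩ := hσ
  have hz1 : ∀ x, p1 x = 0 → ∀ y, σ x y = 0 := by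
    intro x hx y
    have h0 : ∑ y, σ x y = 0 := by rw [hσr x, hx]
    exact (Finset.sum_eq_zero_iff_of_nonneg fun y _ => hσn x y).mp h0 y (Finset.mem_univ y)
  have hz2 : ∀ y, p2 y = 0 → ∀ x, σ x y = 0 := by
    intro y hy x
    have h0 : ∑ x, σ x y = 0 := by rw [hσc y, hy]
    exact (Finset.sum_eq_zero_iff_of_nonneg fun x _ => hσn x y).mp h0 x (Finset.mem_univ x)
  have hq1z : ∀ u : Fin (n+1) → A, p1 (Fin.init u) = 0 → q1 u = 0 := by
    intro u hu
    have h0 : ∑ a, q1 (Fin.snoc (Fin.init u) a) = 0 := by rw [← hc1, hu]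
    have := (Finset.sum_eq_zero_iff_of_nonneg fun a _ => hq1.1 _).mp h0
      (u (Fin.last n)) (Finset.mem_univ _)
    rwa [Fin.snoc_init_self] at this
  have hq2z : ∀ v : Fin (n+1) → A, p2 (Fin.init v) = 0 → q2 v = 0 := by
    intro v hv
    have h0 : ∑ a, q2 (Fin.snoc (Fin.init v) a) = 0 := by rw [← hc2, hv]
    have := (Finset.sum_eq_zero_iff_of_nonneg fun a _ => hq2.1 _).mp h0
      (v (Fin.last n)) (Finset.mem_univ _)
    rwa [Fin.snoc_init_self] at this
  refine ⟨fun u v => mul_nonneg (mul_nonneg (hσn _ _)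
      (div_nonneg (hq1.1 _) (hp1.1 _))) (div_nonneg (hq2.1 _) (hp2.1 _)), ?_, ?_⟩
  · intro u
    rw [sum_snoc (fun v => liftPlan p1 p2 q1 q2 σ u v)]
    by_cases hx : p1 (Fin.init u) = 0
    · have hzz : ∀ (y : Fin n → A) (b : A), liftPlan p1 p2 q1 q2 σ u (Fin.snoc y b) = 0 := by
        intro y b; rw [liftPlan]; simp [hz1 _ hx]
      simp [hzz, hq1z u hx]
    · have hy : ∀ y : Fin n → A, ∑ b, liftPlan p1 p2 q1 q2 σ u (Fin.snoc y b)
          = σ (Fin.init u) y * (q1 u / p1 (Fin.init u)) := by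
        intro y
        by_cases hp2y : p2 y = 0
        · simp [liftPlan, Fin.init_snoc, hz2 y hp2y]
        · calc ∑ b, liftPlan p1 p2 q1 q2 σ u (Fin.snoc y b)
              = σ (Fin.init u) y * (q1 u / p1 (Fin.init u)) / p2 y *
                  ∑ b, q2 (Fin.snoc y b) := by
                rw [Finset.mul_sum]
                refine Finset.sum_congr rfl fun b _ => ?_
                rw [liftPlan]; simp only [Fin.init_snoc]; ring
            _ = _ := by rw [← hc2 y]; exact div_mul_cancel₀ _ hp2y
      rw [Finset.sum_congr rfl fun y _ => hy y, ← Finset.sum_mul, hσr,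
        mul_comm, div_mul_cancel₀ _ hx]
  · intro v
    rw [sum_snoc (fun u => liftPlan p1 p2 q1 q2 σ u v)]
    by_cases hx : p2 (Fin.init v) = 0
    · have hzz : ∀ (y : Fin n → A) (b : A), liftPlan p1 p2 q1 q2 σ (Fin.snoc y b) v = 0 := by
        intro y b; rw [liftPlan]; simp [hz2 _ hx]
      simp [hzz, hq2z v hx]
    · have hy : ∀ y : Fin n → A, ∑ b, liftPlan p1 p2 q1 q2 σ (Fin.snoc y b) v
          = σ y (Fin.init v) * (q2 v / p2 (Fin.init v)) := by
        intro y
        by_cases hp1y : p1 y = 0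
        · simp [liftPlan, Fin.init_snoc, hz1 y hp1y]
        · calc ∑ b, liftPlan p1 p2 q1 q2 σ (Fin.snoc y b) v
              = σ y (Fin.init v) * (q2 v / p2 (Fin.init v)) / p1 y *
                  ∑ b, q1 (Fin.snoc y b) := by
                rw [Finset.mul_sum]
                refine Finset.sum_congr rfl fun b _ => ?_
                rw [liftPlan]; simp only [Fin.init_snoc]; ring
            _ = _ := by rw [← hc1 y]; exact div_mul_cancel₀ _ hp1y
      rw [Finset.sum_congr rfl fun y _ => hy y]
      rw [show (∑ y : Fin n → A, σ y (Fin.init v) * (q2 v / p2 (Fin.init v)))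
          = (∑ y : Fin n → A, σ y (Fin.init v)) * (q2 v / p2 (Fin.init v))
        from (Finset.sum_mul _ _ _).symm]
      rw [hσc, mul_comm, div_mul_cancel₀ _ hx]

end lift

section liftcost
variable {A : Type*} [Fintype A] [DecidableEq A] {n : ℕ}

lemma lift_cost (p1 p2 : (Fin n → A) → ℝ) (q1 q2 : (Fin (n + 1) → A) → ℝ)
    (hp1 : IsDist p1) (hp2 : IsDist p2) (hq1 : IsDist q1) (hq2 : IsDist q2)
    (hc1 : ∀ w : Fin n → A, p1 w = ∑ a : A, q1 (Fin.snoc w a))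
    (hc2 : ∀ w : Fin n → A, p2 w = ∑ a : A, q2 (Fin.snoc w a))
    (σ : (Fin n → A) → (Fin n → A) → ℝ) (hσ : IsCoupling σ p1 p2) :
    transportCost cantorDist (liftPlan p1 p2 q1 q2 σ)
      ≤ transportCost cantorDist σ + ((1:ℝ)/2)^(n+1) := by
  set c : ℝ := ((1:ℝ)/2)^(n+1) with hcc
  have hρnn : ∀ u v, 0 ≤ liftPlan p1 p2 q1 q2 σ u v := fun u v =>
    mul_nonneg (mul_nonneg (hσ.1 _ _) (div_nonneg (hq1.1 _) (hp1.1 _)))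
      (div_nonneg (hq2.1 _) (hp2.1 _))
  have hsumσ : ∑ x : Fin n → A, ∑ y, σ x y = 1 := by
    simp [hσ.2.1, hp1.2]
  have step1 : transportCost cantorDist (liftPlan p1 p2 q1 q2 σ) ≤
      ∑ u, ∑ v, (cantorDist (Fin.init u) (Fin.init v) + c) * liftPlan p1 p2 q1 q2 σ u v :=
    Finset.sum_le_sum fun u _ => Finset.sum_le_sum fun v _ =>
      mul_le_mul_of_nonneg_right (cantorDist_le_init_add u v) (hρnn u v)
  have inner : ∀ (x : Fin n → A) (a : A),
      (∑ v, (cantorDist (Fin.init ((Fin.snoc x a) : Fin (n+1) → A)) (Fin.init v) + c) *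
        liftPlan p1 p2 q1 q2 σ (Fin.snoc x a) v)
      = ∑ y : Fin n → A, ∑ b,
        (cantorDist x y + c) * liftPlan p1 p2 q1 q2 σ (Fin.snoc x a) (Fin.snoc y b) := by
    intro x a
    rw [sum_snoc (fun v => (cantorDist (Fin.init ((Fin.snoc x a) : Fin (n+1) → A)) (Fin.init v) + c) *
      liftPlan p1 p2 q1 q2 σ (Fin.snoc x a) v)]
    simp only [Fin.init_snoc]
  have step2 : ∑ u, ∑ v, (cantorDist (Fin.init u) (Fin.init v) + c) * liftPlan p1 p2 q1 q2 σ u v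
      = ∑ x : Fin n → A, ∑ y : Fin n → A, (cantorDist x y + c) * σ x y := by
    rw [sum_snoc (fun u => ∑ v,
      (cantorDist (Fin.init u) (Fin.init v) + c) * liftPlan p1 p2 q1 q2 σ u v)]
    refine Finset.sum_congr rfl fun x _ => ?_
    rw [Finset.sum_congr rfl fun a _ => inner x a, Finset.sum_comm]
    refine Finset.sum_congr rfl fun y _ => ?_
    rw [← lift_key p1 p2 q1 q2 σ hq1 hq2 hc1 hc2 hσ x y, Finset.mul_sum]
    exact Finset.sum_congr rfl fun a _ => (Finset.mul_sum _ _ _).symm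
  have step3 : ∑ x : Fin n → A, ∑ y : Fin n → A, (cantorDist x y + c) * σ x y
      = transportCost cantorDist σ + c := by
    simp only [add_mul, Finset.sum_add_distrib]
    rw [transportCost]
    congr 1
    simp_rw [← Finset.mul_sum]
    rw [hsumσ, mul_one]
  calc transportCost cantorDist (liftPlan p1 p2 q1 q2 σ) ≤ _ := step1
    _ = _ := step2
    _ = _ := step3

end liftcost

/-- The increments of the Kantorovich metric satisfy
`0 ≤ K(p1^{n+1}, p2^{n+1}) − K(p1^n, p2^n) ≤ 2^{-(n+1)}`. -/
theorem kantorovich_increment_bounds {A : Type*} [Fintype A] [DecidableEq A] {n : ℕ}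
    (p1 p2 : (Fin n → A) → ℝ) (q1 q2 : (Fin (n + 1) → A) → ℝ)
    (hp1 : IsDist p1) (hp2 : IsDist p2) (hq1 : IsDist q1) (hq2 : IsDist q2)
    (hc1 : ∀ w : Fin n → A, p1 w = ∑ a : A, q1 (Fin.snoc w a))
    (hc2 : ∀ w : Fin n → A, p2 w = ∑ a : A, q2 (Fin.snoc w a)) :
    0 ≤ kantorovich cantorDist q1 q2 - kantorovich cantorDist p1 p2 ∧
    kantorovich cantorDist q1 q2 - kantorovich cantorDist p1 p2 ≤ ((1 : ℝ) / 2) ^ (n + 1) := by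
  have h1 : kantorovich cantorDist p1 p2 ≤ kantorovich cantorDist q1 q2 := by
    obtain ⟨π0, hπ0⟩ := coupling_exists q1 q2 hq1 hq2
    refine le_csInf ⟨_, π0, hπ0, rfl⟩ ?_
    rintro s ⟨π, hπ, rfl⟩
    exact (kant_le cantorDist_nonneg (push_coupling p1 p2 q1 q2 hc1 hc2 π hπ)).trans
      (push_cost π hπ.1)
  have h2 : kantorovich cantorDist q1 q2 - ((1:ℝ)/2)^(n+1) ≤ kantorovich cantorDist p1 p2 := by
    obtain ⟨σ0, hσ0⟩ := coupling_exists p1 p2 hp1 hp2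
    refine le_csInf ⟨_, σ0, hσ0, rfl⟩ ?_
    rintro s ⟨σ, hσ, rfl⟩
    rw [sub_le_iff_le_add]
    calc kantorovich cantorDist q1 q2
        ≤ transportCost cantorDist (liftPlan p1 p2 q1 q2 σ) :=
          kant_le cantorDist_nonneg (lift_coupling p1 p2 q1 q2 σ hp1 hp2 hq1 hq2 hc1 hc2 hσ)
      _ ≤ transportCost cantorDist σ + ((1:ℝ)/2)^(n+1) :=
          lift_cost p1 p2 q1 q2 hp1 hp2 hq1 hq2 hc1 hc2 σ hσ
  exact ⟨by linarith, by linarith⟩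
end

section
/- Let S = (X, A, F, H) be a deterministic dynamical system satisfying: (i) any equivalence class [w]_S of zero normalized Lebesgue measure is empty, and (ii) if λ_X([wa]_S) = λ_X([w]_S) then [w]_S = [wa]_S. Let Σ_W be the abstraction Markov chain corresponding to an adaptive partitioning W. If for all w1, w2 ∈ W the transition probability P_{w1,w2} = 1, then F([w1]_S) ⊆ [w2]_S. -/
open MeasureTheory

/-- Normalized Lebesgue measure: `λ_X(E) = λ(E)/λ(X)` (as a real number). -/
noncomputable def lamX {d : ℕ} (X E : Set (Fin d → ℝ)) : ℝ :=
  (volume E).toReal / (volume X).toReal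

/-- The equivalence class `[w]_S` of a word `w`: the set of states `x ∈ X` whose
first `|w|` outputs along the trajectory are exactly `w`. In particular `[Λ]_S = X`. -/
def cls {A : Type*} {d : ℕ} (X : Set (Fin d → ℝ)) (F : (Fin d → ℝ) → (Fin d → ℝ))
    (H : (Fin d → ℝ) → A) (w : List A) : Set (Fin d → ℝ) :=
  {x | x ∈ X ∧ ∀ i : Fin w.length, H (F^[(i : ℕ)] x) = w.get i}

/-- `W` is an adaptive partitioning: the classes `[w]_S`, `w ∈ W`, partition `X`. -/
def IsAdaptivePartition {A : Type*} {d : ℕ} (X : Set (Fin d → ℝ))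
    (F : (Fin d → ℝ) → (Fin d → ℝ)) (H : (Fin d → ℝ) → A) (W : Finset (List A)) : Prop :=
  (⋃ w ∈ W, cls X F H w) = X ∧
    ∀ w1 ∈ W, ∀ w2 ∈ W, w1 ≠ w2 → cls X F H w1 ∩ cls X F H w2 = ∅

open scoped Classical in
/-- Transition probabilities of the abstraction `Σ_W`: with `w1 = a1 :: t1`,
`k = min {|w1| − 1, |w2|}`; if the suffix `(a_2,…,a_{k+1})` of `w1` differs from the
prefix `(b_1,…,b_k)` of `w2`, or `λ_X([w1]_S) = 0`, the probability is `0`; otherwise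
it is `λ_X([a1 w2]_S) / λ_X([w1]_S)`. -/
noncomputable def transP {A : Type*} {d : ℕ} (X : Set (Fin d → ℝ))
    (F : (Fin d → ℝ) → (Fin d → ℝ)) (H : (Fin d → ℝ) → A) : List A → List A → ℝ
  | [], _ => 0
  | (a1 :: t1), w2 =>
    let k := min t1.length w2.length
    if t1.take k ≠ w2.take k ∨ lamX X (cls X F H (a1 :: t1)) = 0 then 0
    else lamX X (cls X F H (a1 :: w2)) / lamX X (cls X F H (a1 :: t1))


lemma cls_subset {A : Type*} {d : ℕ} (X : Set (Fin d → ℝ)) (F : (Fin d → ℝ) → (Fin d → ℝ))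
    (H : (Fin d → ℝ) → A) (w : List A) : cls X F H w ⊆ X := fun _ hx => hx.1

lemma cls_shift {A : Type*} {d : ℕ} {X : Set (Fin d → ℝ)} {F : (Fin d → ℝ) → (Fin d → ℝ)}
    {H : (Fin d → ℝ) → A} (hF : ∀ x ∈ X, F x ∈ X) (a : A) (w : List A)
    {x : Fin d → ℝ} (hx : x ∈ cls X F H (a :: w)) : F x ∈ cls X F H w := by
  refine ⟨hF x hx.1, fun i => ?_⟩
  have h := hx.2 ⟨(i : ℕ) + 1, by simpa using Nat.succ_lt_succ i.2⟩
  simpa [Function.iterate_succ_apply] using h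

lemma cls_anti {A : Type*} {d : ℕ} {X : Set (Fin d → ℝ)} {F : (Fin d → ℝ) → (Fin d → ℝ)}
    {H : (Fin d → ℝ) → A} {u v : List A} (h : u <+: v) :
    cls X F H v ⊆ cls X F H u := by
  intro x hx
  refine ⟨hx.1, fun i => ?_⟩
  have hi : (i : ℕ) < v.length := lt_of_lt_of_le i.2 h.length_le
  have h2 := hx.2 ⟨(i : ℕ), hi⟩
  simp only [List.get_eq_getElem] at h2 ⊢
  rw [h2, h.getElem]

lemma lamX_mono {d : ℕ} {X : Set (Fin d → ℝ)} (hX : Bornology.IsBounded X)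
    {E G : Set (Fin d → ℝ)} (hEG : E ⊆ G) (hG : G ⊆ X) : lamX X E ≤ lamX X G := by
  unfold lamX
  rw [div_eq_mul_inv, div_eq_mul_inv]
  refine mul_le_mul_of_nonneg_right ?_ (by positivity)
  exact ENNReal.toReal_mono ((measure_mono hG).trans_lt hX.measure_lt_top).ne (measure_mono hEG)

lemma cls_eq_of_lamX_eq {A : Type*} {d : ℕ} {X : Set (Fin d → ℝ)}
    {F : (Fin d → ℝ) → (Fin d → ℝ)} {H : (Fin d → ℝ) → A} (hX : Bornology.IsBounded X)
    (hext : ∀ (w : List A) (a : A),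
      lamX X (cls X F H (w ++ [a])) = lamX X (cls X F H w) →
        cls X F H w = cls X F H (w ++ [a])) :
    ∀ (s u : List A), lamX X (cls X F H (u ++ s)) = lamX X (cls X F H u) →
      cls X F H u = cls X F H (u ++ s) := by
  intro s
  induction s with
  | nil => intro u _; simp
  | cons a s ih =>
    intro u h
    have h1 : lamX X (cls X F H (u ++ a :: s)) ≤ lamX X (cls X F H (u ++ [a])) :=
      lamX_mono hX (cls_anti ⟨s, by simp⟩) (cls_subset X F H _)
    have h2 : lamX X (cls X F H (u ++ [a])) ≤ lamX X (cls X F H u) :=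
      lamX_mono hX (cls_anti ⟨[a], rfl⟩) (cls_subset X F H _)
    have hmid : lamX X (cls X F H (u ++ [a])) = lamX X (cls X F H u) :=
      le_antisymm h2 (h ▸ h1)
    have he := hext u a hmid
    have h3 : lamX X (cls X F H ((u ++ [a]) ++ s)) = lamX X (cls X F H (u ++ [a])) := by
      rw [List.append_assoc] ; simpa [hmid] using h
    have := ih (u ++ [a]) h3
    rw [he, this, List.append_assoc]
    rfl

/-- If a transition of the abstraction has probability one, the dynamics maps the
corresponding class into the target class: `P_{w1,w2} = 1 → F([w1]_S) ⊆ [w2]_S`. -/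
theorem abstraction_transition_one {A : Type*} {d : ℕ}
    (X : Set (Fin d → ℝ)) (F : (Fin d → ℝ) → (Fin d → ℝ)) (H : (Fin d → ℝ) → A)
    (hX : Bornology.IsBounded X) (hF : ∀ x ∈ X, F x ∈ X)
    (hzero : ∀ w : List A, lamX X (cls X F H w) = 0 → cls X F H w = ∅)
    (hext : ∀ (w : List A) (a : A),
      lamX X (cls X F H (w ++ [a])) = lamX X (cls X F H w) →
        cls X F H w = cls X F H (w ++ [a]))
    (W : Finset (List A)) (hW : IsAdaptivePartition X F H W) :
    ∀ w1 ∈ W, ∀ w2 ∈ W, transP X F H w1 w2 = 1 →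
      F '' cls X F H w1 ⊆ cls X F H w2 := by
  intro w1 hw1 w2 hw2 hP
  match w1 with
  | [] => simp [transP] at hP
  | a1 :: t1 =>
    rw [transP] at hP
    split_ifs at hP with hcond
    · norm_num at hP
    push_neg at hcond
    obtain ⟨htake, hne⟩ := hcond
    have heq : lamX X (cls X F H (a1 :: w2)) = lamX X (cls X F H (a1 :: t1)) :=
      (div_eq_one_iff_eq hne).mp hP
    have hsub : cls X F H (a1 :: t1) ⊆ cls X F H (a1 :: w2) := by
      rcases le_or_gt t1.length w2.length with hlen | hlen
      · have hk : min t1.length w2.length = t1.length := min_eq_left hlen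
        rw [hk, List.take_length] at htake
        obtain ⟨s, hs⟩ : t1 <+: w2 := htake ▸ List.take_prefix _ _
        have hcls := cls_eq_of_lamX_eq hX hext s (a1 :: t1)
          (by rw [show (a1 :: t1) ++ s = a1 :: w2 by simp [← hs]]; exact heq)
        rw [hcls, show (a1 :: t1) ++ s = a1 :: w2 by simp [← hs]]
      · have hk : min t1.length w2.length = w2.length := min_eq_right hlen.le
        rw [hk, List.take_length] at htake
        have hpre : w2 <+: t1 := htake ▸ List.take_prefix _ _
        obtain ⟨s, hs⟩ := hpre
        exact cls_anti ⟨s, by simp [hs]⟩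
    rintro y ⟨x, hx, rfl⟩
    exact cls_shift hF a1 w2 (hsub hx)
end
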